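/- arXiv:2602.03948 — 2 statements merged into one kernel-verified Lean document; each statement's English description precedes it below -/
import Mathlib

section
/- Fix integers n ≥ r ≥ 2 and M > 0, and suppose λ ≍ n^{(r−1)/2}. Then there exist constants 0 < C₀^{low} ≤ C₀^{high} < ∞, depending only on r and M, such that for every γ ∈ B_{∞,M} and every value of the noisy degree sequence d^{loc} ∈ ℝ^n, the Hessian of ℓ^{loc}_{λ,n} at γ satisfies C₀^{low} n^{r−1} ≤ λ_min(∇²ℓ^{loc}_{λ,n}(γ)) ≤ λ_max(∇²ℓ^{loc}_{λ,n}(γ)) ≤ C₀^{high} n^{r−1}; in particular ℓ^{loc}_{λ,n} is strongly convex on B_{∞,M} with modulus of order n^{r−1}. -/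
open MeasureTheory Finset
open scoped BigOperators ENNReal NNReal Classical

noncomputable section

/-- The type of potential hyperedges: `r`-element subsets of `[n]`. -/
abbrev Edge (n r : ℕ) := {e : Finset (Fin n) // e.card = r}

/-- An `r`-uniform hypergraph on `n` vertices, given by its hyperedge indicator. -/
abbrev HG (n r : ℕ) := Edge n r → Bool

/-- The logistic sigmoid `σ(t) = e^t / (1 + e^t)`. -/
def sigmoid (t : ℝ) : ℝ := Real.exp t / (1 + Real.exp t)

/-- The derivative of the sigmoid, `σ'(t) = e^t / (1 + e^t)^2`. -/
def sigmoid' (t : ℝ) : ℝ := Real.exp t / (1 + Real.exp t) ^ 2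

/-- The `r`-degree of vertex `i` in `G`: the number of hyperedges of `G` containing `i`. -/
def deg {n r : ℕ} (G : HG n r) (i : Fin n) : ℕ :=
  (Finset.univ.filter fun e : Edge n r => G e = true ∧ i ∈ e.1).card

/-- The probability of the hypergraph `G` under the `r`-uniform hypergraph β-model
with parameter `β`. -/
def hgWeight {n r : ℕ} (β : Fin n → ℝ) (G : HG n r) : ℝ :=
  ∏ e : Edge n r,
    if G e then sigmoid (∑ j ∈ e.1, β j) else 1 - sigmoid (∑ j ∈ e.1, β j)

/-- Membership in the sup-norm ball `B_{∞,M}`. -/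
def inBall {n : ℕ} (M : ℝ) (β : Fin n → ℝ) : Prop := ∀ i, |β i| ≤ M

/-- Two hypergraphs are adjacent if they differ in exactly one hyperedge. -/
def Adjacent {n r : ℕ} (G G' : HG n r) : Prop :=
  ∃ e : Edge n r, G e ≠ G' e ∧ ∀ f : Edge n r, f ≠ e → G f = G' f

/-- Probability mass function of the discrete Laplace distribution with parameter `α`. -/
def dLap (α : ℝ) (z : ℤ) : ℝ := ((1 - α) / (1 + α)) * α ^ z.natAbs

/-- Joint pmf of `n` i.i.d. discrete Laplace variables. -/
def dLapVec {n : ℕ} (α : ℝ) (z : Fin n → ℤ) : ℝ := ∏ i, dLap α (z i)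

/-- Real-valued indicator of a proposition. -/
def ind (p : Prop) : ℝ := if p then 1 else 0

/-- Quadratic form of the Hessian of `ℓ^{loc}_{λ,n}` at `γ` (independent of the data):
`x ↦ xᵀ ∇²ℓ^{loc}_{λ,n}(γ) x = Σ_e σ'(Σ_{j∈e} γ_j) (Σ_{j∈e} x_j)² + 2λ ‖x‖²`. -/
def hessLocQF (n r : ℕ) (lam : ℝ) (γ x : Fin n → ℝ) : ℝ :=
  (∑ e : Edge n r, sigmoid' (∑ j ∈ e.1, γ j) * (∑ j ∈ e.1, x j) ^ 2)
    + 2 * lam * ∑ i, (x i) ^ 2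

/-! ### Auxiliary lemmas for Statement 7 -/

lemma count_contain (n r : ℕ) (s : Finset (Fin n)) (hs : s.card ≤ r) :
    (Finset.univ.filter fun e : Edge n r => s ⊆ e.1).card
      = (n - s.card).choose (r - s.card) := by
  have hcard : ((Finset.univ \ s).powersetCard (r - s.card)).card
      = (n - s.card).choose (r - s.card) := by
    rw [Finset.card_powersetCard, Finset.card_sdiff_of_subset (Finset.subset_univ s),
      Finset.card_univ, Fintype.card_fin]
  rw [← hcard]
  refine Finset.card_bij' (fun (e : Edge n r) _ => e.1 \ s)
    (fun t ht => (⟨t ∪ s, by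
        rw [Finset.mem_powersetCard] at ht
        have hd : Disjoint t s :=
          Finset.disjoint_of_subset_left ht.1 Finset.sdiff_disjoint
        rw [Finset.card_union_of_disjoint hd, ht.2]
        omega⟩ : Edge n r)) ?_ ?_ ?_ ?_
  · intro e he
    rw [Finset.mem_filter] at he
    rw [Finset.mem_powersetCard]
    refine ⟨Finset.sdiff_subset_sdiff (Finset.subset_univ _) le_rfl, ?_⟩
    rw [Finset.card_sdiff_of_subset he.2, e.2]
  · intro t ht
    simp [Finset.subset_union_right]
  · intro e he
    rw [Finset.mem_filter] at he
    exact Subtype.ext (by simp [Finset.sdiff_union_of_subset he.2])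
  · intro t ht
    rw [Finset.mem_powersetCard] at ht
    have hd : Disjoint t s :=
      Finset.disjoint_of_subset_left ht.1 Finset.sdiff_disjoint
    simp [Finset.union_sdiff_cancel_right hd]

lemma edge_count_diag (n r : ℕ) (i : Fin n) (hr : 1 ≤ r) :
    (Finset.univ.filter fun e : Edge n r => i ∈ e.1).card = (n-1).choose (r-1) := by
  have h := count_contain n r {i} (by simp; omega)
  simpa [Finset.singleton_subset_iff] using h

lemma edge_count_off (n r : ℕ) (i j : Fin n) (hij : i ≠ j) (hr : 2 ≤ r) :
    (Finset.univ.filter fun e : Edge n r => i ∈ e.1 ∧ j ∈ e.1).card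
      = (n-2).choose (r-2) := by
  have h := count_contain n r {i, j} (by rw [Finset.card_pair hij]; omega)
  rw [Finset.card_pair hij] at h
  simpa [Finset.insert_subset_iff, Finset.singleton_subset_iff] using h

lemma sum_edge_linear (n r : ℕ) (f : Fin n → ℝ) :
    ∑ e : Edge n r, ∑ j ∈ e.1, f j
      = ∑ j, ((Finset.univ.filter fun e : Edge n r => j ∈ e.1).card : ℝ) * f j := by
  calc ∑ e : Edge n r, ∑ j ∈ e.1, f j
      = ∑ e : Edge n r, ∑ j : Fin n, if j ∈ e.1 then f j else 0 := by
        refine Finset.sum_congr rfl fun e _ => ?_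
        rw [Finset.sum_ite_mem, Finset.univ_inter]
    _ = ∑ j : Fin n, ∑ e : Edge n r, if j ∈ e.1 then f j else 0 := Finset.sum_comm
    _ = _ := by
        refine Finset.sum_congr rfl fun j _ => ?_
        rw [← Finset.sum_filter, Finset.sum_const, nsmul_eq_mul]

lemma sum_edge_sq (n r : ℕ) (hr : 2 ≤ r) (hrn : r ≤ n) (x : Fin n → ℝ) :
    ∑ e : Edge n r, (∑ j ∈ e.1, x j) ^ 2
      = ((n-2).choose (r-1) : ℝ) * ∑ i, x i ^ 2
        + ((n-2).choose (r-2) : ℝ) * (∑ i, x i) ^ 2 := by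
  have step1 : ∀ e : Edge n r, (∑ j ∈ e.1, x j) ^ 2
      = ∑ i : Fin n, ∑ j : Fin n, (if i ∈ e.1 ∧ j ∈ e.1 then x i * x j else 0) := by
    intro e
    have h : ∀ i : Fin n, ∑ j : Fin n, (if i ∈ e.1 ∧ j ∈ e.1 then x i * x j else 0)
        = if i ∈ e.1 then ∑ j ∈ e.1, x i * x j else 0 := by
      intro i
      by_cases hi : i ∈ e.1
      · simp only [hi, true_and, if_true]
        rw [Finset.sum_ite_mem, Finset.univ_inter]
      · simp [hi]
    simp only [h]
    rw [Finset.sum_ite_mem, Finset.univ_inter, sq, Finset.sum_mul_sum]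
  have pascal : ((n-1).choose (r-1) : ℝ)
      = ((n-2).choose (r-2) : ℝ) + ((n-2).choose (r-1) : ℝ) := by
    have h1 : n - 1 = (n - 2) + 1 := by omega
    have h2 : r - 1 = (r - 2) + 1 := by omega
    rw [h1, h2, Nat.choose_succ_succ']
    push_cast
    rw [show (r-2)+1 = r-1 by omega]
  calc ∑ e : Edge n r, (∑ j ∈ e.1, x j) ^ 2
      = ∑ e : Edge n r, ∑ i : Fin n, ∑ j : Fin n,
          (if i ∈ e.1 ∧ j ∈ e.1 then x i * x j else 0) :=
        Finset.sum_congr rfl fun e _ => step1 e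
    _ = ∑ i : Fin n, ∑ j : Fin n, ∑ e : Edge n r,
          (if i ∈ e.1 ∧ j ∈ e.1 then x i * x j else 0) := by
        rw [Finset.sum_comm]
        exact Finset.sum_congr rfl fun i _ => Finset.sum_comm
    _ = ∑ i : Fin n, ∑ j : Fin n,
          ((Finset.univ.filter fun e : Edge n r => i ∈ e.1 ∧ j ∈ e.1).card : ℝ)
            * (x i * x j) := by
        refine Finset.sum_congr rfl fun i _ => Finset.sum_congr rfl fun j _ => ?_
        rw [← Finset.sum_filter, Finset.sum_const, nsmul_eq_mul]
    _ = ∑ i : Fin n, (((n-1).choose (r-1) : ℝ) * (x i)^2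
          + ((n-2).choose (r-2) : ℝ) * (x i * (∑ j, x j) - (x i)^2)) := by
        refine Finset.sum_congr rfl fun i _ => ?_
        rw [← Finset.sum_erase_add _ _ (Finset.mem_univ i)]
        have hdiag : ((Finset.univ.filter fun e : Edge n r => i ∈ e.1 ∧ i ∈ e.1).card : ℝ)
              * (x i * x i) = ((n-1).choose (r-1) : ℝ) * (x i)^2 := by
          simp only [and_self]
          rw [edge_count_diag n r i (by omega), sq]
        have hoff : ∑ j ∈ Finset.univ.erase i,
            ((Finset.univ.filter fun e : Edge n r => i ∈ e.1 ∧ j ∈ e.1).card : ℝ)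
              * (x i * x j)
            = ((n-2).choose (r-2) : ℝ) * (x i * (∑ j, x j) - (x i)^2) := by
          have h1 : ∀ j ∈ Finset.univ.erase i,
              ((Finset.univ.filter fun e : Edge n r => i ∈ e.1 ∧ j ∈ e.1).card : ℝ)
                * (x i * x j) = ((n-2).choose (r-2) : ℝ) * (x i * x j) := by
            intro j hj
            rw [edge_count_off n r i j (Ne.symm (Finset.ne_of_mem_erase hj)) hr]
          rw [Finset.sum_congr rfl h1, ← Finset.mul_sum, ← Finset.mul_sum,
            Finset.sum_erase_eq_sub (Finset.mem_univ i)]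
          ring
        rw [hdiag, hoff]; ring
    _ = _ := by
        rw [Finset.sum_add_distrib, ← Finset.mul_sum, ← Finset.mul_sum, pascal]
        have : ∑ i, (x i * (∑ j, x j) - (x i)^2)
            = (∑ j, x j)^2 - ∑ i, (x i)^2 := by
          rw [Finset.sum_sub_distrib, ← Finset.sum_mul, sq]
        rw [this]
        ring

lemma sigmoid'_nonneg (t : ℝ) : 0 ≤ sigmoid' t := by
  unfold sigmoid'; positivity

lemma sigmoid'_le_one (t : ℝ) : sigmoid' t ≤ 1 := by
  unfold sigmoid'
  rw [div_le_one (by positivity)]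
  nlinarith [Real.exp_pos t]

lemma sigmoid'_ge (K t : ℝ) (h : |t| ≤ K) :
    Real.exp (-K) / (1 + Real.exp K) ^ 2 ≤ sigmoid' t := by
  unfold sigmoid'
  have hab := abs_le.1 h
  have h1 : Real.exp (-K) ≤ Real.exp t := Real.exp_le_exp.2 (by linarith [hab.1])
  have h2 : (1 + Real.exp t) ^ 2 ≤ (1 + Real.exp K) ^ 2 := by
    have := Real.exp_le_exp.2 hab.2
    nlinarith [Real.exp_pos t, Real.exp_pos K]
  exact div_le_div₀ (Real.exp_pos t).le h1 (by positivity) h2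

set_option maxHeartbeats 1000000 in
/-- Two-sided eigenvalue bounds (stated via the quadratic form) for the
Hessian of `ℓ^{loc}_{λ,n}` on `B_{∞,M}`; in particular `ℓ^{loc}_{λ,n}` is strongly
convex on `B_{∞,M}` with modulus of order `n^{r-1}`. -/
theorem stmt7 (r : ℕ) (hr : 2 ≤ r) (M cl ch : ℝ)
    (hM : 0 < M) (hcl : 0 < cl) (hch : cl ≤ ch) :
    ∃ Clow Chigh : ℝ, 0 < Clow ∧ Clow ≤ Chigh ∧
      ∀ (n : ℕ), r ≤ n →
      ∀ (lam : ℝ),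
        cl * (n : ℝ) ^ (((r : ℝ) - 1) / 2) ≤ lam →
        lam ≤ ch * (n : ℝ) ^ (((r : ℝ) - 1) / 2) →
      ∀ γ : Fin n → ℝ, inBall M γ →
      ∀ x : Fin n → ℝ,
        Clow * (n : ℝ) ^ (r - 1) * ∑ i, (x i) ^ 2 ≤ hessLocQF n r lam γ x ∧
        hessLocQF n r lam γ x ≤ Chigh * (n : ℝ) ^ (r - 1) * ∑ i, (x i) ^ 2 := by
  have hch0 : 0 < ch := lt_of_lt_of_le hcl hch
  set cσ : ℝ := Real.exp (-((r:ℝ) * M)) / (1 + Real.exp ((r:ℝ) * M)) ^ 2 with hcσdef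
  have hcσ : 0 < cσ := by positivity
  set Chigh : ℝ := (r : ℝ) + 2 * ch with hChdef
  have hCh : 0 < Chigh := by positivity
  set C1 : ℝ := cσ / ((2:ℝ)^(r-1) * (Nat.factorial (r-1) : ℝ)) with hC1def
  have hC1 : 0 < C1 := by
    apply div_pos hcσ
    positivity
  set C2 : ℝ := (2*cl) / ((2*(r:ℝ)) ^ (((r:ℝ)-1)/2)) with hC2def
  have hrpos : (0:ℝ) < (r:ℝ) := by exact_mod_cast Nat.lt_of_lt_of_le (by norm_num) hr
  have hC2 : 0 < C2 := by
    apply div_pos (by linarith)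
    apply Real.rpow_pos_of_pos
    linarith
  refine ⟨min C1 (min C2 Chigh), Chigh, lt_min hC1 (lt_min hC2 hCh),
    (min_le_right _ _).trans (min_le_right _ _), ?_⟩
  intro n hn lam hlam1 hlam2 γ hγ x
  have hn2 : 2 ≤ n := le_trans hr hn
  have hn0 : (0:ℝ) < (n:ℝ) := by exact_mod_cast Nat.lt_of_lt_of_le (by norm_num) hn2
  have hn1 : (1:ℝ) ≤ (n:ℝ) := by exact_mod_cast Nat.one_le_of_lt hn2
  have hx2 : 0 ≤ ∑ i, x i ^ 2 := Finset.sum_nonneg fun i _ => sq_nonneg _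
  have hr1 : (1:ℝ) ≤ (r:ℝ) - 1 := by
    have : (2:ℝ) ≤ (r:ℝ) := by exact_mod_cast hr
    linarith
  -- nat pow vs rpow
  have hpow : ((n:ℝ) ^ (r-1) : ℝ) = (n:ℝ) ^ ((r:ℝ)-1) := by
    rw [← Real.rpow_natCast (n:ℝ) (r-1)]
    congr 1
    push_cast [Nat.cast_sub (by omega : 1 ≤ r)]
    ring
  have hlam0 : 0 < lam :=
    lt_of_lt_of_le (by positivity : (0:ℝ) < cl * (n : ℝ) ^ (((r : ℝ) - 1) / 2)) hlam1
  -- bound on arguments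
  have harg : ∀ e : Edge n r, |∑ j ∈ e.1, γ j| ≤ (r:ℝ) * M := by
    intro e
    calc |∑ j ∈ e.1, γ j| ≤ ∑ j ∈ e.1, |γ j| := Finset.abs_sum_le_sum_abs _ _
      _ ≤ ∑ _j ∈ e.1, M := Finset.sum_le_sum fun j _ => hγ j
      _ = (r:ℝ) * M := by rw [Finset.sum_const, e.2, nsmul_eq_mul]
  constructor
  · -- lower bound
    by_cases hbig : 2 * r ≤ n
    · -- use the combinatorial term
      have hterm2 : 0 ≤ 2 * lam * ∑ i, x i ^ 2 := by positivity
      have hstep : cσ * ∑ e : Edge n r, (∑ j ∈ e.1, x j) ^ 2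
          ≤ ∑ e : Edge n r, sigmoid' (∑ j ∈ e.1, γ j) * (∑ j ∈ e.1, x j) ^ 2 := by
        rw [Finset.mul_sum]
        refine Finset.sum_le_sum fun e _ => ?_
        exact mul_le_mul_of_nonneg_right (sigmoid'_ge _ _ (harg e)) (sq_nonneg _)
      have hkey : ((n-2).choose (r-1) : ℝ) * ∑ i, x i ^ 2
          ≤ ∑ e : Edge n r, (∑ j ∈ e.1, x j) ^ 2 := by
        rw [sum_edge_sq n r hr hn x]
        nlinarith [sq_nonneg (∑ i, x i), (by positivity : (0:ℝ) ≤ (((n-2).choose (r-2)) : ℝ))]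
      -- binomial lower bound
      have hchoose : (n:ℝ)^((r:ℝ)-1) / ((2:ℝ)^(r-1) * (Nat.factorial (r-1) : ℝ))
          ≤ ((n-2).choose (r-1) : ℝ) := by
        have hfacpos : (0:ℝ) < (Nat.factorial (r-1) : ℝ) := by
          exact_mod_cast Nat.factorial_pos (r-1)
        have he : n - 2 + 1 - (r-1) = n - r := by omega
        have hb : (((n - r) ^ (r-1) : ℕ) : ℝ) / ((Nat.factorial (r-1) : ℕ) : ℝ)
            ≤ ((n-2).choose (r-1) : ℝ) := by
          have hb0 := Nat.pow_le_choose (α := ℝ) (r-1) (n-2)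
          rw [he] at hb0
          exact_mod_cast hb0
        have hnr : ((n - r : ℕ) : ℝ) = (n:ℝ) - (r:ℝ) := by
          exact Nat.cast_sub hn
        have h2r : (n:ℝ)/2 ≤ ((n - r : ℕ):ℝ) := by
          rw [hnr]
          have h2rn : (2:ℝ) * r ≤ n := by exact_mod_cast hbig
          linarith
        have hlow : ((n:ℝ)/2) ^ (r-1) ≤ (((n - r) ^ (r-1) : ℕ) : ℝ) := by
          push_cast
          exact pow_le_pow_left₀ (by positivity) h2r _
        calc (n:ℝ)^((r:ℝ)-1) / ((2:ℝ)^(r-1) * (Nat.factorial (r-1) : ℝ))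
            = ((n:ℝ)/2) ^ (r-1) / (Nat.factorial (r-1) : ℝ) := by
              rw [div_pow, ← hpow]; ring
          _ ≤ (((n - r) ^ (r-1) : ℕ) : ℝ) / (Nat.factorial (r-1) : ℝ) := by
              gcongr
          _ ≤ _ := hb
      have hmin : min C1 (min C2 Chigh) ≤ C1 := min_le_left _ _
      have hC1bound : C1 * (n:ℝ)^(r-1) ≤ cσ * ((n-2).choose (r-1) : ℝ) := by
        rw [hC1def, hpow]
        calc cσ / ((2:ℝ)^(r-1) * (Nat.factorial (r-1) : ℝ)) * (n:ℝ)^((r:ℝ)-1)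
            = cσ * ((n:ℝ)^((r:ℝ)-1) / ((2:ℝ)^(r-1) * (Nat.factorial (r-1) : ℝ))) := by
              ring
          _ ≤ cσ * ((n-2).choose (r-1) : ℝ) :=
              mul_le_mul_of_nonneg_left hchoose hcσ.le
      calc min C1 (min C2 Chigh) * (n:ℝ)^(r-1) * ∑ i, x i ^ 2
          ≤ C1 * (n:ℝ)^(r-1) * ∑ i, x i ^ 2 := by
            apply mul_le_mul_of_nonneg_right _ hx2
            exact mul_le_mul_of_nonneg_right hmin (by positivity)
        _ ≤ cσ * ((n-2).choose (r-1) : ℝ) * ∑ i, x i ^ 2 :=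
            mul_le_mul_of_nonneg_right hC1bound hx2
        _ = cσ * (((n-2).choose (r-1) : ℝ) * ∑ i, x i ^ 2) := by ring
        _ ≤ cσ * ∑ e : Edge n r, (∑ j ∈ e.1, x j) ^ 2 :=
            mul_le_mul_of_nonneg_left hkey hcσ.le
        _ ≤ ∑ e : Edge n r, sigmoid' (∑ j ∈ e.1, γ j) * (∑ j ∈ e.1, x j) ^ 2 := hstep
        _ ≤ hessLocQF n r lam γ x := by
            unfold hessLocQF
            nlinarith [hx2, hlam0]
    · -- small n : use the regularization term
      push_neg at hbig
      have hterm1 : 0 ≤ ∑ e : Edge n r, sigmoid' (∑ j ∈ e.1, γ j) * (∑ j ∈ e.1, x j) ^ 2 :=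
        Finset.sum_nonneg fun e _ => mul_nonneg (sigmoid'_nonneg _) (sq_nonneg _)
      have hnle : (n:ℝ) ≤ 2*(r:ℝ) := by
        have : n ≤ 2*r := le_of_lt hbig
        exact_mod_cast this
      have hhalf : (0:ℝ) ≤ ((r:ℝ)-1)/2 := by linarith
      have hsplit : (n:ℝ)^((r:ℝ)-1)
          = (n:ℝ)^(((r:ℝ)-1)/2) * (n:ℝ)^(((r:ℝ)-1)/2) := by
        rw [← Real.rpow_add hn0]
        norm_num
      have hbase : (n:ℝ)^(((r:ℝ)-1)/2) ≤ (2*(r:ℝ))^(((r:ℝ)-1)/2) :=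
        Real.rpow_le_rpow hn0.le hnle hhalf
      have hC2bound : C2 * (n:ℝ)^(r-1) ≤ 2 * lam := by
        rw [hpow, hsplit, hC2def]
        have h2rpos : (0:ℝ) < (2*(r:ℝ))^(((r:ℝ)-1)/2) :=
          Real.rpow_pos_of_pos (by linarith) _
        have hnn : (0:ℝ) ≤ (n:ℝ)^(((r:ℝ)-1)/2) := (Real.rpow_pos_of_pos hn0 _).le
        calc 2*cl / (2*(r:ℝ))^(((r:ℝ)-1)/2)
              * ((n:ℝ)^(((r:ℝ)-1)/2) * (n:ℝ)^(((r:ℝ)-1)/2))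
            ≤ 2*cl / (2*(r:ℝ))^(((r:ℝ)-1)/2)
              * ((2*(r:ℝ))^(((r:ℝ)-1)/2) * (n:ℝ)^(((r:ℝ)-1)/2)) := by
              apply mul_le_mul_of_nonneg_left _ (by positivity)
              exact mul_le_mul_of_nonneg_right hbase hnn
          _ = 2 * (cl * (n:ℝ)^(((r:ℝ)-1)/2)) := by
              field_simp
          _ ≤ 2 * lam := by linarith
      have hmin : min C1 (min C2 Chigh) ≤ C2 :=
        (min_le_right _ _).trans (min_le_left _ _)
      calc min C1 (min C2 Chigh) * (n:ℝ)^(r-1) * ∑ i, x i ^ 2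
          ≤ C2 * (n:ℝ)^(r-1) * ∑ i, x i ^ 2 := by
            apply mul_le_mul_of_nonneg_right _ hx2
            exact mul_le_mul_of_nonneg_right hmin (by positivity)
        _ ≤ 2 * lam * ∑ i, x i ^ 2 := mul_le_mul_of_nonneg_right hC2bound hx2
        _ ≤ hessLocQF n r lam γ x := by
            unfold hessLocQF
            linarith
  · -- upper bound
    have hcnt : ((n-1).choose (r-1) : ℝ) ≤ (n:ℝ)^(r-1) := by
      calc ((n-1).choose (r-1) : ℝ) ≤ (((n-1) ^ (r-1) : ℕ) : ℝ) := by
            exact_mod_cast Nat.choose_le_pow (n-1) (r-1)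
        _ ≤ (n:ℝ)^(r-1) := by
            push_cast
            apply pow_le_pow_left₀ (by positivity)
            have : ((n-1:ℕ):ℝ) ≤ (n:ℝ) := by exact_mod_cast Nat.sub_le n 1
            exact this
    have hT1 : ∑ e : Edge n r, sigmoid' (∑ j ∈ e.1, γ j) * (∑ j ∈ e.1, x j) ^ 2
        ≤ (r:ℝ) * ((n:ℝ)^(r-1) * ∑ i, x i ^ 2) := by
      calc ∑ e : Edge n r, sigmoid' (∑ j ∈ e.1, γ j) * (∑ j ∈ e.1, x j) ^ 2
          ≤ ∑ e : Edge n r, (∑ j ∈ e.1, x j) ^ 2 :=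
            Finset.sum_le_sum fun e _ => by
              have h := mul_le_mul_of_nonneg_right (sigmoid'_le_one (∑ j ∈ e.1, γ j))
                (sq_nonneg (∑ j ∈ e.1, x j))
              simpa using h
        _ ≤ ∑ e : Edge n r, (r:ℝ) * ∑ j ∈ e.1, x j ^ 2 :=
            Finset.sum_le_sum fun e _ => by
              have h := sq_sum_le_card_mul_sum_sq (s := e.1) (f := x)
              rw [e.2] at h
              exact h
        _ = (r:ℝ) * ∑ e : Edge n r, ∑ j ∈ e.1, x j ^ 2 := by rw [Finset.mul_sum]
        _ = (r:ℝ) * ∑ j, ((n-1).choose (r-1) : ℝ) * x j ^ 2 := by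
            rw [sum_edge_linear n r (fun j => x j ^ 2)]
            congr 1
            refine Finset.sum_congr rfl fun j _ => ?_
            rw [edge_count_diag n r j (by omega)]
        _ ≤ (r:ℝ) * ((n:ℝ)^(r-1) * ∑ i, x i ^ 2) := by
            apply mul_le_mul_of_nonneg_left _ (Nat.cast_nonneg r)
            rw [Finset.mul_sum]
            exact Finset.sum_le_sum fun j _ => mul_le_mul_of_nonneg_right hcnt (sq_nonneg _)
    have hlamle : lam ≤ ch * (n:ℝ)^(r-1) := by
      rw [hpow]
      calc lam ≤ ch * (n:ℝ)^(((r:ℝ)-1)/2) := hlam2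
        _ ≤ ch * (n:ℝ)^((r:ℝ)-1) := by
            apply mul_le_mul_of_nonneg_left _ hch0.le
            apply Real.rpow_le_rpow_of_exponent_le hn1
            linarith
    unfold hessLocQF
    calc (∑ e : Edge n r, sigmoid' (∑ j ∈ e.1, γ j) * (∑ j ∈ e.1, x j) ^ 2)
          + 2 * lam * ∑ i, x i ^ 2
        ≤ (r:ℝ) * ((n:ℝ)^(r-1) * ∑ i, x i ^ 2)
          + 2 * (ch * (n:ℝ)^(r-1)) * ∑ i, x i ^ 2 := by
          have h2 : 2 * lam * ∑ i, x i ^ 2 ≤ 2 * (ch * (n:ℝ)^(r-1)) * ∑ i, x i ^ 2 := by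
            apply mul_le_mul_of_nonneg_right _ hx2
            linarith
          linarith
      _ = Chigh * (n:ℝ)^(r-1) * ∑ i, x i ^ 2 := by rw [hChdef]; ring
end
end

section
/- Fix integers r ≥ 2 and M > 0. There exist constants c₁₀, C₁₀ > 0 depending only on r and M such that for every n ≥ r, every β ∈ B_{∞,M}, and G drawn from the r-uniform hypergraph β-model with parameter β, with probability at least 1 − e^{−c₁₀ n} one has ‖d(G) − E_β[d(G)]‖₂ ≤ C₁₀ n^{r/2}, where E_β[d(G)] = μ(β) with μ_i(β) = Σ_{e : i ∈ e} σ(Σ_{j∈e} β_j). -/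
open MeasureTheory Finset
open scoped BigOperators ENNReal NNReal Classical

noncomputable section

/-- Expected `r`-degree of vertex `i` under the β-model: `μ_i(β) = Σ_{e ∋ i} σ(Σ_{j∈e} β_j)`. -/
def μdeg (n r : ℕ) (β : Fin n → ℝ) (i : Fin n) : ℝ :=
  ∑ e : Edge n r, if i ∈ e.1 then sigmoid (∑ j ∈ e.1, β j) else 0

/-!
The centred degree vector `Z = d(G) - μ(β)` is a linear image of the independent centred edge
indicators: `⟨g, Z⟩ = Σ_e (Σ_{j ∈ e} g_j) (1_{e ∈ G} - p_e)`. Hence every linear form of `Z` is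
subgaussian, with variance proxy `Σ_e (Σ_{j ∈ e} g_j)² ≤ r n^{r-1} ‖g‖²`. Writing `exp (‖z‖² / 2)`
as a Gaussian average of `exp ⟨z, g⟩` (Hubbard–Stratonovich) upgrades this to
`E exp (‖Z‖² / (8 r n^{r-1})) ≤ 2^n`, and Markov's inequality at `‖Z‖² = 16 r n^r` bounds the
failure probability by `2^n e^{-2n} ≤ e^{-n}`.
-/

section ProductBernoulli

variable {ι : Type*} [Fintype ι]

def bernWeight (p : ι → ℝ) (x : ι → Bool) : ℝ :=
  ∏ e, if x e then p e else 1 - p e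

lemma bernWeight_nonneg {p : ι → ℝ} (hp0 : ∀ e, 0 ≤ p e) (hp1 : ∀ e, p e ≤ 1)
    (x : ι → Bool) : 0 ≤ bernWeight p x :=
  prod_nonneg fun e _ => by split <;> linarith [hp0 e, hp1 e]

variable [DecidableEq ι]

lemma sum_pi_bool_prod (f : ι → Bool → ℝ) :
    ∑ x : ι → Bool, ∏ e, f e (x e) = ∏ e, (f e true + f e false) := by
  simp [← Fintype.prod_sum]

lemma sum_bernWeight (p : ι → ℝ) : ∑ x, bernWeight p x = 1 := by
  simp [bernWeight, sum_pi_bool_prod (fun e b => if b then p e else 1 - p e)]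

lemma bernoulli_mgf_le (t : ℝ) {p : ℝ} (hp0 : 0 ≤ p) (hp1 : p ≤ 1) :
    p * Real.exp (t * (1 - p)) + (1 - p) * Real.exp (t * -p) ≤ Real.exp (t ^ 2 / 2) := by
  -- convexity of `exp` on `[-t, t]` reduces the left side to `cosh t`
  have chord : ∀ y, |y| ≤ 1 →
      Real.exp (t * y) ≤ (1 + y) / 2 * Real.exp t + (1 - y) / 2 * Real.exp (-t) := by
    intro y hy
    obtain ⟨hy₁, hy₂⟩ := abs_le.mp hy
    have h := convexOn_exp.2 (Set.mem_univ (-t)) (Set.mem_univ t)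
      (by linarith : (0 : ℝ) ≤ (1 - y) / 2) (by linarith : (0 : ℝ) ≤ (1 + y) / 2) (by ring)
    simp only [smul_eq_mul] at h
    rw [show (1 - y) / 2 * -t + (1 + y) / 2 * t = t * y by ring] at h
    linarith
  have hA := chord (1 - p) (abs_le.mpr ⟨by linarith, by linarith⟩)
  have hB := chord (-p) (abs_le.mpr ⟨by linarith, by linarith⟩)
  have hcosh := Real.cosh_le_exp_half_sq t
  rw [Real.cosh_eq] at hcosh
  nlinarith [mul_le_mul_of_nonneg_left hA hp0,
    mul_le_mul_of_nonneg_left hB (by linarith : (0 : ℝ) ≤ 1 - p)]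

lemma sum_bernWeight_mul_exp_le {p : ι → ℝ} (hp0 : ∀ e, 0 ≤ p e) (hp1 : ∀ e, p e ≤ 1)
    (a : ι → ℝ) :
    ∑ x, bernWeight p x * Real.exp (∑ e, a e * ((if x e then 1 else 0) - p e))
      ≤ Real.exp (∑ e, a e ^ 2 / 2) := by
  simp_rw [bernWeight, Real.exp_sum, ← prod_mul_distrib]
  rw [sum_pi_bool_prod (fun e b => (if b then p e else 1 - p e) *
    Real.exp (a e * ((if b then 1 else 0) - p e)))]
  refine prod_le_prod (fun e _ => ?_) fun e _ => ?_
  · have := hp0 e; have := hp1 e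
    simp only [if_true, Bool.false_eq_true, if_false]
    positivity
  · simpa [zero_sub] using bernoulli_mgf_le (a e) (hp0 e) (hp1 e)

end ProductBernoulli

section GaussianLinearization

open Real

lemma exp_mul_sub_sq_div_two (t x : ℝ) :
    Real.exp (t * x - x ^ 2 / 2) = Real.exp (t ^ 2 / 2) * Real.exp (-(1 / 2) * (x - t) ^ 2) := by
  rw [← Real.exp_add]; ring_nf

lemma integrable_exp_mul_sub_sq_div_two (t : ℝ) :
    Integrable fun x : ℝ => Real.exp (t * x - x ^ 2 / 2) := by
  simp_rw [exp_mul_sub_sq_div_two t]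
  exact ((integrable_exp_neg_mul_sq (by norm_num)).comp_sub_right t).const_mul _

lemma integral_exp_mul_sub_sq_div_two (t : ℝ) :
    ∫ x : ℝ, Real.exp (t * x - x ^ 2 / 2) = Real.exp (t ^ 2 / 2) * √(2 * π) := by
  simp_rw [exp_mul_sub_sq_div_two t]
  rw [integral_const_mul, integral_sub_right_eq_self (fun x => Real.exp (-(1 / 2) * x ^ 2)) t,
    integral_gaussian]
  norm_num [mul_comm]

lemma exp_sum_sq_div_two_eq_integral {ι : Type*} [Fintype ι] (z : ι → ℝ) :
    Real.exp (∑ i, z i ^ 2 / 2)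
      = (√(2 * π))⁻¹ ^ Fintype.card ι *
          ∫ g : ι → ℝ, ∏ i, Real.exp (z i * g i - g i ^ 2 / 2) := by
  have h2π : √(2 * π) ≠ 0 := by positivity
  rw [integral_fintype_prod_volume_eq_prod (fun i x => Real.exp (z i * x - x ^ 2 / 2)),
    ← Finset.card_univ, ← prod_const, ← prod_mul_distrib, Real.exp_sum]
  refine prod_congr rfl fun i _ => ?_
  rw [integral_exp_mul_sub_sq_div_two]
  field_simp

/-- Average the bound on `E exp⟨g, Z⟩` against the Gaussian weight of
`exp_sum_sq_div_two_eq_integral`. -/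
lemma sum_mul_exp_sum_sq_le {Ω ι : Type*} [Fintype Ω] [Fintype ι] (w : Ω → ℝ)
    (Z : Ω → ι → ℝ) (hw : ∀ ω, 0 ≤ w ω)
    (hZ : ∀ g : ι → ℝ, ∑ ω, w ω * Real.exp (∑ i, g i * Z ω i) ≤ Real.exp (∑ i, g i ^ 2 / 8)) :
    ∑ ω, w ω * Real.exp (∑ i, Z ω i ^ 2 / 2) ≤ 2 ^ Fintype.card ι := by
  set c := (√(2 * π))⁻¹ with hc
  have hterm : ∀ ω, Integrable fun g : ι → ℝ =>
      w ω * ∏ i, Real.exp (Z ω i * g i - g i ^ 2 / 2) := fun ω =>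
    (Integrable.fintype_prod (f := fun i x => Real.exp (Z ω i * x - x ^ 2 / 2))
      fun _ => integrable_exp_mul_sub_sq_div_two _).const_mul _
  have hpointwise : ∀ g : ι → ℝ, ∑ ω, w ω * ∏ i, Real.exp (Z ω i * g i - g i ^ 2 / 2)
      ≤ ∏ i, Real.exp (-(3 / 8) * g i ^ 2) := by
    intro g
    have hsplit : ∀ ω, ∏ i, Real.exp (Z ω i * g i - g i ^ 2 / 2)
        = Real.exp (∑ i, -(g i ^ 2 / 2)) * Real.exp (∑ i, g i * Z ω i) := by
      intro ω
      rw [← Real.exp_add, ← sum_add_distrib, Real.exp_sum]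
      exact prod_congr rfl fun i _ => by ring_nf
    calc ∑ ω, w ω * ∏ i, Real.exp (Z ω i * g i - g i ^ 2 / 2)
        = Real.exp (∑ i, -(g i ^ 2 / 2)) * ∑ ω, w ω * Real.exp (∑ i, g i * Z ω i) := by
          simp only [hsplit, mul_sum]
          exact sum_congr rfl fun ω _ => by ring
      _ ≤ Real.exp (∑ i, -(g i ^ 2 / 2)) * Real.exp (∑ i, g i ^ 2 / 8) := by gcongr; exact hZ g
      _ = ∏ i, Real.exp (-(3 / 8) * g i ^ 2) := by
          rw [← Real.exp_add, ← sum_add_distrib, Real.exp_sum]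
          exact prod_congr rfl fun i _ => by ring_nf
  have hgauss : c * ∫ x : ℝ, Real.exp (-(3 / 8) * x ^ 2) ≤ 2 := by
    rw [integral_gaussian, hc, ← Real.sqrt_inv, ← Real.sqrt_mul (by positivity),
      show (2 * π)⁻¹ * (π / (3 / 8)) = 4 / 3 by field_simp; ring]
    nlinarith [Real.sq_sqrt (show (0 : ℝ) ≤ 4 / 3 by norm_num), Real.sqrt_nonneg (4 / 3)]
  calc ∑ ω, w ω * Real.exp (∑ i, Z ω i ^ 2 / 2)
      = c ^ Fintype.card ι *
          ∫ g : ι → ℝ, ∑ ω, w ω * ∏ i, Real.exp (Z ω i * g i - g i ^ 2 / 2) := by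
        rw [integral_finsetSum _ fun ω _ => hterm ω, mul_sum]
        refine sum_congr rfl fun ω _ => ?_
        rw [integral_const_mul, exp_sum_sq_div_two_eq_integral]
        ring
    _ ≤ c ^ Fintype.card ι * ∫ g : ι → ℝ, ∏ i, Real.exp (-(3 / 8) * g i ^ 2) := by
        refine mul_le_mul_of_nonneg_left (integral_mono_of_nonneg (.of_forall fun g => ?_) ?_
          (.of_forall hpointwise)) (by positivity)
        · exact sum_nonneg fun ω _ => mul_nonneg (hw ω) (prod_nonneg fun i _ => by positivity)
        · exact Integrable.fintype_prod (f := fun _ x => Real.exp (-(3 / 8) * x ^ 2))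
            fun _ => integrable_exp_neg_mul_sq (by norm_num)
    _ = (c * ∫ x : ℝ, Real.exp (-(3 / 8) * x ^ 2)) ^ Fintype.card ι := by
        rw [integral_fintype_prod_volume_eq_pow (fun x => Real.exp (-(3 / 8) * x ^ 2)), mul_pow]
    _ ≤ 2 ^ Fintype.card ι := pow_le_pow_left₀ (by positivity) hgauss _

end GaussianLinearization

lemma one_sub_le_sum_mul_ind_of_sum_mul_exp_le {Ω : Type*} [Fintype Ω] {w : Ω → ℝ}
    (hw0 : ∀ ω, 0 ≤ w ω) (hw1 : ∑ ω, w ω = 1) (S : Ω → ℝ) (P : Ω → Prop) {a t K : ℝ}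
    (ha : 0 < a) (hK : ∑ ω, w ω * Real.exp (S ω / a) ≤ K) (hP : ∀ ω, ¬ P ω → t ≤ S ω) :
    1 - K * Real.exp (-(t / a)) ≤ ∑ ω, w ω * ind (P ω) := by
  have hbad : ∀ ω, 1 - ind (P ω) ≤ Real.exp (-(t / a)) * Real.exp (S ω / a) := by
    intro ω
    rw [← Real.exp_add]
    by_cases h : P ω
    · simp only [ind, if_pos h, sub_self]; positivity
    · simp only [ind, if_neg h, sub_zero, Real.one_le_exp_iff]
      have := div_le_div_of_nonneg_right (hP ω h) ha.le
      linarith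
  calc 1 - K * Real.exp (-(t / a))
      ≤ 1 - Real.exp (-(t / a)) * ∑ ω, w ω * Real.exp (S ω / a) := by
        nlinarith [Real.exp_pos (-(t / a))]
    _ = ∑ ω, w ω * (1 - Real.exp (-(t / a)) * Real.exp (S ω / a)) := by
        simp only [mul_sub, sum_sub_distrib, mul_one, hw1, mul_sum, mul_left_comm]
    _ ≤ ∑ ω, w ω * ind (P ω) :=
        sum_le_sum fun ω _ => mul_le_mul_of_nonneg_left (by linarith [hbad ω]) (hw0 ω)

lemma sigmoid_eq_real_sigmoid (t : ℝ) : sigmoid t = Real.sigmoid t := by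
  rw [sigmoid, Real.sigmoid_def, Real.exp_neg]
  field_simp
  ring

section Hypergraph

variable {n r : ℕ}

def edgeProb (β : Fin n → ℝ) (e : Edge n r) : ℝ := sigmoid (∑ j ∈ e.1, β j)

lemma hgWeight_eq_bernWeight (β : Fin n → ℝ) : hgWeight (r := r) β = bernWeight (edgeProb β) :=
  rfl

lemma edgeProb_nonneg {β : Fin n → ℝ} (e : Edge n r) : 0 ≤ edgeProb β e := by
  simpa [edgeProb, sigmoid_eq_real_sigmoid] using Real.sigmoid_nonneg _

lemma edgeProb_le_one {β : Fin n → ℝ} (e : Edge n r) : edgeProb β e ≤ 1 := by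
  simpa [edgeProb, sigmoid_eq_real_sigmoid] using Real.sigmoid_le_one _

lemma hgWeight_nonneg (β : Fin n → ℝ) (G : HG n r) : 0 ≤ hgWeight β G :=
  bernWeight_nonneg edgeProb_nonneg edgeProb_le_one G

lemma sum_hgWeight (β : Fin n → ℝ) : ∑ G : HG n r, hgWeight β G = 1 :=
  sum_bernWeight _

lemma card_edges_mem_le (i : Fin n) : #{e : Edge n r | i ∈ e.1} ≤ n ^ (r - 1) :=
  calc #{e : Edge n r | i ∈ e.1} ≤ #(powersetCard (r - 1) (univ : Finset (Fin n))) := by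
        refine card_le_card_of_injOn (fun e => e.1.erase i) (fun e he => ?_) fun e₁ h₁ e₂ h₂ h => ?_
        · simp only [coe_filter, Set.mem_ofPred_eq, mem_univ, true_and] at he
          simp [card_erase_of_mem he, e.2]
        · simp only [coe_filter, Set.mem_ofPred_eq, mem_univ, true_and] at h₁ h₂
          exact Subtype.ext (by rw [← insert_erase h₁, ← insert_erase h₂]; exact congrArg _ h)
    _ = n.choose (r - 1) := by simp
    _ ≤ n ^ (r - 1) := Nat.choose_le_pow _ _

lemma sum_edges_sq_sum_le (g : Fin n → ℝ) :
    ∑ e : Edge n r, (∑ i ∈ e.1, g i) ^ 2 ≤ r * n ^ (r - 1) * ∑ i, g i ^ 2 :=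
  calc ∑ e : Edge n r, (∑ i ∈ e.1, g i) ^ 2
      ≤ ∑ e : Edge n r, (r : ℝ) * ∑ i ∈ e.1, g i ^ 2 := sum_le_sum fun e _ => by
        simpa [e.2] using sq_sum_le_card_mul_sum_sq (s := e.1) (f := g)
    _ = r * ∑ i, #{e : Edge n r | i ∈ e.1} * g i ^ 2 := by
        rw [← mul_sum]
        congr 1
        rw [sum_comm' (t' := univ) (s' := fun i => {e : Edge n r | i ∈ e.1}) (by simp)]
        simp
    _ ≤ r * n ^ (r - 1) * ∑ i, g i ^ 2 := by
        rw [mul_assoc]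
        gcongr
        rw [mul_sum]
        gcongr with i
        exact_mod_cast card_edges_mem_le i

lemma sum_mul_deg_sub_μdeg (β : Fin n → ℝ) (G : HG n r) (v : Fin n → ℝ) :
    ∑ i, v i * ((deg G i : ℝ) - μdeg n r β i)
      = ∑ e : Edge n r, (∑ j ∈ e.1, v j) * ((if G e then 1 else 0) - edgeProb β e) := by
  have hdeg : ∀ i, (deg G i : ℝ) - μdeg n r β i
      = ∑ e : Edge n r, if i ∈ e.1 then (if G e then 1 else 0) - edgeProb β e else 0 := by
    intro i
    rw [deg, card_filter, μdeg, Nat.cast_sum, ← sum_sub_distrib]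
    refine sum_congr rfl fun e _ => ?_
    by_cases hG : G e <;> by_cases hi : i ∈ e.1 <;> simp [hG, hi, edgeProb]
  simp only [hdeg, mul_sum, mul_ite, mul_zero, sum_mul]
  rw [sum_comm]
  simp

lemma sum_hgWeight_mul_exp_le (β : Fin n → ℝ) (g : Fin n → ℝ) :
    ∑ G : HG n r, hgWeight β G * Real.exp (∑ i, g i * ((deg G i : ℝ) - μdeg n r β i))
      ≤ Real.exp (r * n ^ (r - 1) / 2 * ∑ i, g i ^ 2) := by
  simp only [sum_mul_deg_sub_μdeg, hgWeight_eq_bernWeight]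
  refine (sum_bernWeight_mul_exp_le edgeProb_nonneg edgeProb_le_one _).trans (Real.exp_le_exp.mpr ?_)
  have := sum_edges_sq_sum_le (r := r) g
  rw [← sum_div]
  linarith

lemma sum_hgWeight_mul_exp_sum_sq_le (hr : 0 < r) (hn : 0 < n) (β : Fin n → ℝ) :
    ∑ G : HG n r, hgWeight β G *
        Real.exp ((∑ i, ((deg G i : ℝ) - μdeg n r β i) ^ 2) / (8 * (r * n ^ (r - 1))))
      ≤ 2 ^ n := by
  set Λ : ℝ := r * n ^ (r - 1)
  have hΛ : 0 < Λ := by positivity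
  set s := (√(4 * Λ))⁻¹
  have hs : s ^ 2 = (4 * Λ)⁻¹ := by rw [inv_pow, Real.sq_sqrt (by positivity)]
  have key := sum_mul_exp_sum_sq_le (hgWeight β)
    (fun G i => s * ((deg G i : ℝ) - μdeg n r β i)) (hgWeight_nonneg β) fun g => by
      convert sum_hgWeight_mul_exp_le β (fun i => s * g i) using 4 with G
      · exact sum_congr rfl fun i _ => by ring
      · rw [mul_sum]
        refine sum_congr rfl fun i _ => ?_
        rw [mul_pow, hs]
        field_simp
        ring
  rw [Fintype.card_fin] at key
  convert key using 4 with G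
  rw [sum_div]
  refine sum_congr rfl fun i _ => ?_
  rw [mul_pow, hs]
  field_simp
  ring

end Hypergraph

theorem stmt16_general (r : ℕ) (hr : 2 ≤ r) (M : ℝ) :
    ∃ c₁₀ C₁₀ : ℝ, 0 < c₁₀ ∧ 0 < C₁₀ ∧
      ∀ (n : ℕ), r ≤ n → ∀ β : Fin n → ℝ, inBall M β →
        1 - Real.exp (-c₁₀ * n) ≤
          ∑ G : HG n r, hgWeight β G *
            ind (Real.sqrt (∑ i, ((deg G i : ℝ) - μdeg n r β i) ^ 2) ≤
              C₁₀ * (n : ℝ) ^ ((r : ℝ) / 2)) := by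
  refine ⟨1, 4 * √r, one_pos, by positivity, fun n hn β _ => ?_⟩
  have hr0 : 0 < r := by omega
  have hn0 : 0 < n := by omega
  have hthreshold : (4 * √r * (n : ℝ) ^ ((r : ℝ) / 2)) ^ 2 = 16 * r * n ^ r := by
    rw [Real.rpow_div_two_eq_sqrt _ (by positivity), Real.rpow_natCast, mul_pow, mul_pow,
      ← pow_mul, pow_mul', Real.sq_sqrt (by positivity), Real.sq_sqrt (by positivity)]
    ring
  have hexponent : 16 * r * (n : ℝ) ^ r / (8 * (r * n ^ (r - 1))) = 2 * n := by
    rw [show (n : ℝ) ^ r = n ^ (r - 1) * n by rw [← pow_succ, Nat.sub_add_cancel hr0]]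
    field_simp
    ring
  have htail := one_sub_le_sum_mul_ind_of_sum_mul_exp_le (hgWeight_nonneg β) (sum_hgWeight β) _ _
    (by positivity) (sum_hgWeight_mul_exp_sum_sq_le hr0 hn0 β) fun G hG =>
      (hthreshold ▸ (Real.lt_sqrt (by positivity)).mp (not_le.mp hG)).le
  refine le_trans ?_ htail
  have h2n : (2 : ℝ) ^ n ≤ Real.exp n := by
    rw [← Real.exp_one_pow]
    exact pow_le_pow_left₀ (by norm_num) (by linarith [Real.add_one_le_exp 1]) n
  rw [hexponent]
  refine sub_le_sub_left ?_ 1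
  calc 2 ^ n * Real.exp (-(2 * n)) ≤ Real.exp n * Real.exp (-(2 * n)) := by gcongr
    _ = Real.exp (-1 * n) := by rw [← Real.exp_add]; ring_nf

/-- Concentration of the `r`-degree sequence around its mean:
`‖d(G) − E_β[d(G)]‖₂ ≤ C₁₀ n^{r/2}` with probability at least `1 − e^{−c₁₀ n}`. -/
theorem stmt16 (r : ℕ) (hr : 2 ≤ r) (M : ℝ) (hM : 0 < M) :
    ∃ c₁₀ C₁₀ : ℝ, 0 < c₁₀ ∧ 0 < C₁₀ ∧
      ∀ (n : ℕ), r ≤ n → ∀ β : Fin n → ℝ, inBall M β →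
        1 - Real.exp (-c₁₀ * n) ≤
          ∑ G : HG n r, hgWeight β G *
            ind (Real.sqrt (∑ i, ((deg G i : ℝ) - μdeg n r β i) ^ 2) ≤
              C₁₀ * (n : ℝ) ^ ((r : ℝ) / 2)) :=
  stmt16_general r hr M
end
end
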